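/- Let φ be a perfect 2-coloring of Ci_∞(D_n) with positive outer degrees b, c satisfying b + c = 2n + 1. Then for every integer i with φ(i) ≠ φ(i+2), one has φ(i-2n+1) = φ(i+2) and φ(i+2n+1) = φ(i). -/

import Mathlib

/-- Neighborhood of `i` in the infinite circulant graph `Ci_∞(D_n)`,
`D_n = {±1, ±3, …, ±(2n-1)}`: the integers at odd distance less than `2n` from `i`. -/
noncomputable def nbrs (n : ℕ) (i : ℤ) : Finset ℤ :=
  (Finset.Icc (i - (2*(n:ℤ) - 1)) (i + (2*(n:ℤ) - 1))).filter (fun j => Odd (j - i))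

/-- `φ` is a perfect 2-coloring of `Ci_∞(D_n)` with outer degrees `(b, c)`:
every vertex of color 0 (black) has exactly `b` neighbors of color 1 (white), and
every vertex of color 1 has exactly `c` neighbors of color 0. -/
def Perfect2 (n : ℕ) (φ : ℤ → Fin 2) (b c : ℕ) : Prop :=
  (∀ i, φ i = 0 → ((nbrs n i).filter (fun j => φ j = 1)).card = b) ∧
  (∀ i, φ i = 1 → ((nbrs n i).filter (fun j => φ j = 0)).card = c)

/-!
The neighborhoods of `i` and `i + 2` differ in one vertex each:
`nbrs n i = S ∪ {i - 2n + 1}` and `nbrs n (i + 2) = S ∪ {i + 2n + 1}` with `#S = 2n - 1`.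
If `φ i ≠ φ (i + 2)`, the perfect-coloring conditions at `i` and at `i + 2` count the vertices
of `S` of color `φ (i + 2)`, resp. `φ i` — together exactly `#S` — plus each end vertex that has
the counted color. Since the two counts add up to `b + c = 2n + 1 = #S + 2`, both end vertices
must have the counted color.
-/

open Finset

lemma Finset.card_filter_eq_card_filter_erase_add {α : Type*} [DecidableEq α] {s : Finset α}
    {a : α} (ha : a ∈ s) (p : α → Prop) [DecidablePred p] :
    #{x ∈ s | p x} = #{x ∈ s.erase a | p x} + if p a then 1 else 0 := by
  rw [card_filter, card_filter, sum_erase_add s _ ha]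

lemma Fin.two_ne_iff_eq {x y z : Fin 2} (h : y ≠ z) : x ≠ y ↔ x = z := by
  omega

lemma mem_nbrs {n : ℕ} {i j : ℤ} :
    j ∈ nbrs n i ↔ i - (2 * n - 1) ≤ j ∧ j ≤ i + (2 * n - 1) ∧ (j - i) % 2 = 1 := by
  simp [nbrs, Int.odd_iff, and_assoc]

lemma nbrs_eq_image (n : ℕ) (i : ℤ) :
    nbrs n i = (range (2 * n)).image (fun k : ℕ => i - (2 * n - 1) + 2 * k) := by
  ext j
  simp only [mem_nbrs, mem_image, mem_range]
  constructor
  · rintro ⟨hlo, hhi, hodd⟩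
    exact ⟨((j - (i - (2 * n - 1))) / 2).toNat, by omega, by omega⟩
  · rintro ⟨k, hk, rfl⟩
    omega

lemma card_nbrs (n : ℕ) (i : ℤ) : #(nbrs n i) = 2 * n := by
  rw [nbrs_eq_image, card_image_of_injective _ (fun k l hkl => by omega), card_range]

lemma erase_nbrs_add_two (n : ℕ) (i : ℤ) :
    (nbrs n (i + 2)).erase (i + 2 * n + 1) = (nbrs n i).erase (i - 2 * n + 1) := by
  ext j
  simp only [mem_erase, mem_nbrs]
  omega

lemma card_filter_nbrs_add_card_filter_not_nbrs_add_two {n : ℕ} (hn : 0 < n)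
    (p : ℤ → Prop) [DecidablePred p] (i : ℤ) :
    #{j ∈ nbrs n i | p j} + #{j ∈ nbrs n (i + 2) | ¬ p j} + 1 =
      2 * n + (if p (i - 2 * n + 1) then 1 else 0) + (if ¬ p (i + 2 * n + 1) then 1 else 0) := by
  have hleft : i - 2 * n + 1 ∈ nbrs n i := mem_nbrs.2 ⟨by omega, by omega, by omega⟩
  have hright : i + 2 * n + 1 ∈ nbrs n (i + 2) := mem_nbrs.2 ⟨by omega, by omega, by omega⟩
  rw [card_filter_eq_card_filter_erase_add hleft, card_filter_eq_card_filter_erase_add hright,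
    erase_nbrs_add_two]
  set common := (nbrs n i).erase (i - 2 * n + 1)
  have hcommon : #common + 1 = 2 * n := by rw [card_erase_add_one hleft, card_nbrs]
  have hsplit : #{j ∈ common | p j} + #{j ∈ common | ¬ p j} = #common :=
    card_filter_add_card_filter_not p
  omega

lemma nbrs_ends_of_card_filter_eq {n : ℕ} (hn : 0 < n) (p : ℤ → Prop) [DecidablePred p]
    (i : ℤ) (h : #{j ∈ nbrs n i | p j} + #{j ∈ nbrs n (i + 2) | ¬ p j} = 2 * n + 1) :
    p (i - 2 * n + 1) ∧ ¬ p (i + 2 * n + 1) := by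
  have hsum := card_filter_nbrs_add_card_filter_not_nbrs_add_two hn p i
  split_ifs at hsum with hl hr <;> first | exact ⟨hl, hr⟩ | omega

lemma Perfect2.card_filter_ne {n b c : ℕ} {φ : ℤ → Fin 2} (hφ : Perfect2 n φ b c) (i : ℤ) :
    #{j ∈ nbrs n i | φ j ≠ φ i} = if φ i = 0 then b else c := by
  split_ifs with hi
  · rw [← hφ.1 i hi]
    exact congrArg card (filter_congr fun j _ => by omega)
  · rw [← hφ.2 i (by omega)]
    exact congrArg card (filter_congr fun j _ => by omega)

theorem neq_pattern_plus_general (n b c : ℕ) (hn : 0 < n)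
    (hbc : b + c = 2*n + 1)
    (φ : ℤ → Fin 2) (hφ : Perfect2 n φ b c)
    (i : ℤ) (h : φ i ≠ φ (i + 2)) :
    φ (i - 2*(n:ℤ) + 1) = φ (i + 2) ∧ φ (i + 2*(n:ℤ) + 1) = φ i := by
  have hcount : #{j ∈ nbrs n i | φ j = φ (i + 2)} + #{j ∈ nbrs n (i + 2) | ¬ φ j = φ (i + 2)}
      = 2 * n + 1 := by
    have hat_i := hφ.card_filter_ne i
    have hat_i2 := hφ.card_filter_ne (i + 2)
    simp only [Fin.two_ne_iff_eq h] at hat_i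
    rw [hat_i, hat_i2]
    split_ifs <;> omega
  obtain ⟨hleft, hright⟩ := nbrs_ends_of_card_filter_eq hn _ i hcount
  exact ⟨hleft, (Fin.two_ne_iff_eq h.symm).1 hright⟩

/-- If `b + c = 2n+1` and `φ(i) ≠ φ(i+2)`, then `φ(i-2n+1) = φ(i+2)`
and `φ(i+2n+1) = φ(i)`. -/
theorem neq_pattern_plus (n b c : ℕ) (hn : 0 < n) (hb : 0 < b) (hc : 0 < c)
    (hbc : b + c = 2*n + 1)
    (φ : ℤ → Fin 2) (hφ : Perfect2 n φ b c)
    (i : ℤ) (h : φ i ≠ φ (i + 2)) :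
    φ (i - 2*(n:ℤ) + 1) = φ (i + 2) ∧ φ (i + 2*(n:ℤ) + 1) = φ i :=
  neq_pattern_plus_general n b c hn hbc φ hφ i h
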